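/- Let X be a normed space (over ℝ or ℂ), let (x_i)_{i∈I} be a net (equivalently, a function u : ι → X together with a filter l on ι), and let x ∈ X. Then x_i → x in the ball topology b_X if and only if for every y ∈ X one has liminf_i ‖x_i − y‖ ≥ ‖x − y‖, where the liminf is taken in [0, ∞]. -/

import Mathlib

/-!
The closed-ball complements `(closedBall y ε)ᶜ` containing `x` are exactly those with
`ε < ‖x - y‖`, and they form a subbasis of the neighbourhoods of `x`. Hence `x_i → x` means
that, for each `y`, every `ε < ‖x - y‖` is eventually exceeded by `‖x_i - y‖`, which is the
characterisation of `‖x - y‖ ≤ liminf ‖x_i - y‖`.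
-/

open Filter Topology
open scoped ENNReal

noncomputable section

namespace BallTop

/-- The ball topology `b_X` of a normed space: the coarsest topology in which every
norm-closed ball (of positive radius) is closed. -/
def ballTopology (X : Type*) [NormedAddCommGroup X] : TopologicalSpace X :=
  TopologicalSpace.generateFrom
    {s : Set X | ∃ (x : X) (ε : ℝ), 0 < ε ∧ s = (Metric.closedBall x ε)ᶜ}

theorem _root_.ENNReal.ofReal_le_liminf_ofReal_iff {ι : Type*} {l : Filter ι} {f : ι → ℝ}
    {a : ℝ} :
    ENNReal.ofReal a ≤ l.liminf (fun i => ENNReal.ofReal (f i)) ↔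
      ∀ ε : ℝ, 0 < ε → ε < a → ∀ᶠ i in l, ε < f i := by
  rw [le_liminf_iff]
  constructor
  · intro h ε hε hεa
    filter_upwards [h _ ((ENNReal.ofReal_lt_ofReal_iff (hε.trans hεa)).2 hεa)] with i hi
    exact (ENNReal.ofReal_lt_ofReal_iff_of_nonneg hε.le).1 hi
  · intro h b hb
    rcases eq_or_ne b 0 with rfl | hb0
    · have ha : 0 < a := ENNReal.ofReal_pos.1 hb
      filter_upwards [h (a / 2) (half_pos ha) (half_lt_self ha)] with i hi
      exact ENNReal.ofReal_pos.2 ((half_pos ha).trans hi)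
    · have hb_top : b ≠ ∞ := hb.ne_top
      have hb_real : b.toReal < a := (ENNReal.lt_ofReal_iff_toReal_lt hb_top).1 hb
      filter_upwards [h b.toReal (ENNReal.toReal_pos hb0 hb_top) hb_real] with i hi
      exact (ENNReal.lt_ofReal_iff_toReal_lt hb_top).2 hi

theorem mem_compl_closedBall_iff_lt_norm_sub {X : Type*} [NormedAddCommGroup X] {x y : X}
    {ε : ℝ} : x ∈ (Metric.closedBall y ε)ᶜ ↔ ε < ‖x - y‖ := by
  rw [Set.mem_compl_iff, Metric.mem_closedBall, dist_eq_norm, not_le]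

theorem tendsto_ballTopology_iff {X : Type*} [NormedAddCommGroup X] {ι : Type*} {u : ι → X}
    {l : Filter ι} {x : X} :
    Tendsto u l (@nhds X (ballTopology X) x) ↔
      ∀ y : X, ∀ ε : ℝ, 0 < ε → ε < ‖x - y‖ → ∀ᶠ i in l, ε < ‖u i - y‖ := by
  rw [ballTopology, TopologicalSpace.tendsto_nhds_generateFrom_iff]
  simp only [Set.mem_ofPred_eq, forall_exists_index, and_imp]
  constructor
  · intro h y ε hε hεx
    exact mem_of_superset (h _ y ε hε rfl (mem_compl_closedBall_iff_lt_norm_sub.2 hεx))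
      fun _ => mem_compl_closedBall_iff_lt_norm_sub.1
  · rintro h _ y ε hε rfl hx
    exact mem_of_superset (h y ε hε (mem_compl_closedBall_iff_lt_norm_sub.1 hx))
      fun _ => mem_compl_closedBall_iff_lt_norm_sub.2

theorem tendsto_ballTopology_iff_liminf_general
    {X : Type*} [NormedAddCommGroup X]
    {ι : Type*} (u : ι → X) (l : Filter ι) (x : X) :
    Tendsto u l (@nhds X (ballTopology X) x) ↔
      ∀ y : X, ENNReal.ofReal ‖x - y‖ ≤ l.liminf fun i => ENNReal.ofReal ‖u i - y‖ :=
  tendsto_ballTopology_iff.trans <| forall_congr' fun _ => ENNReal.ofReal_le_liminf_ofReal_iff.symm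

/-- A net `(x_i)` in a normed space (over `ℝ` or `ℂ`) converges to `x` in
the ball topology if and only if `liminf_i ‖x_i − y‖ ≥ ‖x − y‖` for every `y`. -/
theorem tendsto_ballTopology_iff_liminf
    {𝕜 : Type*} [RCLike 𝕜] {X : Type*} [NormedAddCommGroup X] [NormedSpace 𝕜 X]
    {ι : Type*} (u : ι → X) (l : Filter ι) [l.NeBot] (x : X) :
    Tendsto u l (@nhds X (ballTopology X) x) ↔
      ∀ y : X, ENNReal.ofReal ‖x - y‖ ≤ l.liminf fun i => ENNReal.ofReal ‖u i - y‖ :=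
  tendsto_ballTopology_iff_liminf_general u l x

end BallTop
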